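/- Fix n ≥ 1 and positive reals Δ₁,…,Δ_n. For integers N₁,…,N_n with each N_i ≥ 2, set Δ̄_i = Δ_i/N_i, N = N₁⋯N_n, and let U_n(N₁,…,N_n) be the n×n matrix with [U_n]_{i,i} = N·(N_i+1)(2N_i+1)/6·Δ̄_i² and [U_n]_{i,j} = N·(N_i+1)(N_j+1)/4·Δ̄_iΔ̄_j for i ≠ j. Then, as all N₁,…,N_n tend to infinity (along the product/atTop filter on the multi-index (N₁,…,N_n)), the matrix N · U_n(N₁,…,N_n)⁻¹ converges to the matrix L_n ∈ ℝ^{n×n} with diagonal entries [L_n]_{i,i} = 12(3n−2)/(Δ_i²(3n+1)) and off-diagonal entries [L_n]_{i,j} = −36/(Δ_iΔ_j(3n+1)) for i ≠ j. -/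

import Mathlib

/-!
`Uₙ / N` converges entrywise to the second-moment matrix `M = D (J/4 + I/12) D` of the uniform
distribution on the box `∏ [0, Δᵢ]`, where `D = diag Δ` and `J` is the all-ones matrix. Since `J² = n J`, the inverse of
`J/4 + I/12` is `12 I - 36/(3n+1) J`, so `M⁻¹ = D⁻¹ (12 I - 36/(3n+1) J) D⁻¹ = Lₙ`. Matrix
inversion is continuous at the invertible `M`, hence `N • Uₙ⁻¹ = (Uₙ / N)⁻¹ → Lₙ`.
-/

open Filter Matrix Topology

lemma Matrix.inv_smul_of_ne_zero {ι K : Type*} [Fintype ι] [DecidableEq ι] [Field K]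
    {c : K} (hc : c ≠ 0) (A : Matrix ι ι K) : (c • A)⁻¹ = c⁻¹ • A⁻¹ := by
  by_cases hA : IsUnit A.det
  · exact inv_smul' A (Units.mk0 c hc) hA
  · have hcA : ¬IsUnit (c • A).det := by
      rwa [det_smul, IsUnit.mul_iff, not_and_or, or_iff_right (not_not.2 (hc.isUnit.pow _))]
    rw [nonsing_inv_apply_not_isUnit A hA, nonsing_inv_apply_not_isUnit _ hcA, smul_zero]

lemma Matrix.of_const_one_mul_self {ι R : Type*} [Fintype ι] [Semiring R] :
    (of fun _ _ => 1 : Matrix ι ι R) * of (fun _ _ => 1) = Fintype.card ι • of fun _ _ => 1 := by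
  ext i j
  simp [mul_apply]

section BoxSecondMoment

variable {ι : Type*} [Fintype ι] [DecidableEq ι] (Δ : ι → ℝ)

-- `E[x xᵀ]` for `x` uniform on the box `∏ [0, Δᵢ]`.
noncomputable def boxSecondMoment : Matrix ι ι ℝ :=
  of fun i j => if i = j then Δ i ^ 2 / 3 else Δ i * Δ j / 4

-- `Uₙ / N`: the mean of `s sᵀ` over the endpoints `s = (Δᵢ kᵢ / Nᵢ)ᵢ`, `1 ≤ kᵢ ≤ Nᵢ`.
noncomputable def endpointSecondMoment (Nv : ι → ℕ) : Matrix ι ι ℝ :=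
  of fun i j => if i = j then ((Nv i + 1) * (2 * Nv i + 1) / 6) * (Δ i / Nv i) ^ 2
    else ((Nv i + 1) * (Nv j + 1) / 4) * (Δ i / Nv i * (Δ j / Nv j))

local notation "J" => (of fun _ _ => 1 : Matrix ι ι ℝ)

lemma boxSecondMoment_eq_diagonal_mul :
    boxSecondMoment Δ = diagonal Δ * ((4 : ℝ)⁻¹ • J + (12 : ℝ)⁻¹ • 1) * diagonal Δ := by
  ext i j
  rcases eq_or_ne i j with rfl | hij
  · simp only [boxSecondMoment, of_apply, if_pos, smul_of, mul_diagonal, diagonal_mul,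
      Matrix.add_apply, Pi.smul_apply, smul_eq_mul, mul_one, Matrix.smul_apply, one_apply_eq]
    ring
  · simp only [boxSecondMoment, of_apply, hij, if_false, smul_of, mul_diagonal, diagonal_mul,
      Matrix.add_apply, Pi.smul_apply, smul_eq_mul, mul_one, Matrix.smul_apply, one_apply_ne hij,
      mul_zero, add_zero]
    ring

lemma smul_ones_add_smul_one_mul_eq_one :
    ((4 : ℝ)⁻¹ • J + (12 : ℝ)⁻¹ • 1) * ((12 : ℝ) • 1 - (36 / (3 * Fintype.card ι + 1) : ℝ) • J)
      = 1 := by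
  simp only [add_mul, mul_sub, smul_mul_smul_comm, mul_one, one_mul, of_const_one_mul_self]
  match_scalars
  · field_simp
    ring
  · ring

lemma boxSecondMoment_mul_eq_one (hΔ : ∀ i, Δ i ≠ 0) :
    boxSecondMoment Δ * (of fun i j =>
      if i = j then 12 * (3 * (Fintype.card ι : ℝ) - 2) / (Δ i ^ 2 * (3 * Fintype.card ι + 1))
      else -36 / (Δ i * Δ j * (3 * Fintype.card ι + 1))) = 1 := by
  have hL : (of fun i j =>
      if i = j then 12 * (3 * (Fintype.card ι : ℝ) - 2) / (Δ i ^ 2 * (3 * Fintype.card ι + 1))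
      else -36 / (Δ i * Δ j * (3 * Fintype.card ι + 1))) = diagonal Δ⁻¹ *
        ((12 : ℝ) • 1 - (36 / (3 * Fintype.card ι + 1) : ℝ) • J) * diagonal Δ⁻¹ := by
    ext i j
    rcases eq_or_ne i j with rfl | hij
    · simp only [of_apply, if_pos, smul_of, mul_diagonal, diagonal_mul, Pi.inv_apply,
        Matrix.sub_apply, Matrix.smul_apply, one_apply_eq, smul_eq_mul, mul_one, Pi.smul_apply]
      field_simp
      ring
    · simp only [of_apply, hij, if_false, smul_of, mul_diagonal, diagonal_mul, Pi.inv_apply,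
        Matrix.sub_apply, Matrix.smul_apply, one_apply_ne hij, smul_eq_mul, mul_zero,
        Pi.smul_apply, mul_one, zero_sub, mul_neg, neg_mul]
      field_simp
  have hΔΔ : diagonal Δ * diagonal Δ⁻¹ = 1 := by
    rw [diagonal_mul_diagonal, ← diagonal_one]
    exact congrArg diagonal (funext fun i => mul_inv_cancel₀ (hΔ i))
  rw [hL, boxSecondMoment_eq_diagonal_mul]
  calc _ = diagonal Δ * ((4 : ℝ)⁻¹ • J + (12 : ℝ)⁻¹ • 1) * (diagonal Δ * diagonal Δ⁻¹) *
        ((12 : ℝ) • 1 - (36 / (3 * Fintype.card ι + 1) : ℝ) • J) * diagonal Δ⁻¹ := by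
        simp only [Matrix.mul_assoc]
    _ = 1 := by
      rw [hΔΔ, Matrix.mul_one, Matrix.mul_assoc (diagonal Δ), smul_ones_add_smul_one_mul_eq_one,
        Matrix.mul_one, hΔΔ]

end BoxSecondMoment

lemma tendsto_natCast_apply_atTop {ι : Type*} (i : ι) :
    Tendsto (fun Nv : ι → ℕ => (Nv i : ℝ)) atTop atTop :=
  tendsto_natCast_atTop_atTop.comp <|
    tendsto_atTop_atTop.2 fun b => ⟨fun _ => b, fun _ hNv => hNv i⟩

lemma tendsto_mul_add_div_self_atTop (a b : ℝ) :
    Tendsto (fun x : ℝ => (a * x + b) / x) atTop (𝓝 a) := by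
  have h : Tendsto (fun x : ℝ => a + b * x⁻¹) atTop (𝓝 (a + b * 0)) :=
    tendsto_const_nhds.add (tendsto_inv_atTop_zero.const_mul b)
  rw [mul_zero, add_zero] at h
  refine h.congr' ?_
  filter_upwards [eventually_ne_atTop 0] with x hx
  field_simp

lemma tendsto_endpointSecondMoment {ι : Type*} [Fintype ι] [DecidableEq ι] (Δ : ι → ℝ) :
    Tendsto (endpointSecondMoment Δ) atTop (𝓝 (boxSecondMoment Δ)) := by
  have hlim (a b : ℝ) (i : ι) : Tendsto (fun Nv : ι → ℕ => (a * Nv i + b) / Nv i) atTop (𝓝 a) :=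
    (tendsto_mul_add_div_self_atTop a b).comp (tendsto_natCast_apply_atTop i)
  refine tendsto_pi_nhds.2 fun i => tendsto_pi_nhds.2 fun j => ?_
  rcases eq_or_ne i j with rfl | hij
  · convert ((hlim 1 1 i).mul (hlim 2 1 i)).div_const 6 |>.mul_const (Δ i ^ 2) using 1
    · ext Nv
      simp only [endpointSecondMoment, of_apply, if_pos, one_mul]
      ring
    · simp only [boxSecondMoment, of_apply, if_pos]
      congr 1
      ring
  · convert ((hlim 1 1 i).mul (hlim 1 1 j)).div_const 4 |>.mul_const (Δ i * Δ j) using 1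
    · ext Nv
      simp only [endpointSecondMoment, of_apply, hij, if_false, one_mul]
      ring
    · simp only [boxSecondMoment, of_apply, hij, if_false]
      congr 1
      ring

theorem lim_N_smul_Un_inv
    (n : ℕ)
    (Δ : Fin n → ℝ) (hΔ : ∀ i, 0 < Δ i) :
    Filter.Tendsto
      (fun Nv : Fin n → ℕ =>
        (∏ l, (Nv l : ℝ)) •
          (Matrix.of fun i j : Fin n =>
            if i = j then
              (∏ l, (Nv l : ℝ)) * (((Nv i : ℝ) + 1) * (2 * (Nv i : ℝ) + 1) / 6)
                * (Δ i / (Nv i : ℝ)) ^ 2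
            else
              (∏ l, (Nv l : ℝ)) * (((Nv i : ℝ) + 1) * ((Nv j : ℝ) + 1) / 4)
                * ((Δ i / (Nv i : ℝ)) * (Δ j / (Nv j : ℝ))))⁻¹)
      Filter.atTop
      (nhds (Matrix.of fun i j : Fin n =>
        if i = j then 12 * (3 * (n : ℝ) - 2) / ((Δ i) ^ 2 * (3 * (n : ℝ) + 1))
        else -36 / (Δ i * Δ j * (3 * (n : ℝ) + 1)))) := by
  have hML := boxSecondMoment_mul_eq_one Δ fun i => (hΔ i).ne'
  rw [Fintype.card_fin] at hML
  have hdet : IsUnit (boxSecondMoment Δ).det := isUnit_det_of_right_inverse hML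
  rw [← inv_eq_right_inv hML]
  refine ((continuousAt_matrix_inv _ ?_).tendsto.comp (tendsto_endpointSecondMoment Δ)).congr' ?_
  · simpa using NormedRing.inverse_continuousAt hdet.unit
  filter_upwards [eventually_ge_atTop fun _ => 1] with Nv hNv
  have hN : (∏ l, (Nv l : ℝ)) ≠ 0 :=
    Finset.prod_ne_zero_iff.2 fun l _ => Nat.cast_ne_zero.2 (Nat.one_le_iff_ne_zero.1 (hNv l))
  calc _ = (∏ l, (Nv l : ℝ)) • ((∏ l, (Nv l : ℝ)) • endpointSecondMoment Δ Nv)⁻¹ := by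
        rw [Function.comp_apply, inv_smul_of_ne_zero hN, smul_smul, mul_inv_cancel₀ hN, one_smul]
    _ = _ := by
      congr
      ext i j
      simp only [endpointSecondMoment, Matrix.smul_apply, of_apply, smul_eq_mul, mul_ite]
      split_ifs <;> ring
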